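/- Let M ∈ ℝ^{n×n} be antisymmetric (Mᵗ = −M), and let u be a smooth solution of i∂_t u − Δ_{C} u + V(x,t)u = 0 where C(x) = Mx/2 and Δ_C = (∇ − iC)². Then φ(x,t) := u(e^{Mt}x, t) solves i∂_t φ − Δφ + Ṽ(x,t)φ + (|Mx|²/4)φ = 0, where Ṽ(x,t) = V(e^{Mt}x, t). -/

import Mathlib

open Matrix

section StmtAux

open NormedSpace

variable {n : ℕ}

private lemma pi_single_sum (v : Fin n → ℝ) : ∑ i, v i • (Pi.single i 1 : Fin n → ℝ) = v := by
  funext j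
  simp [Finset.sum_apply, Pi.single_apply, mul_ite, Finset.sum_ite_eq']

private lemma clm_expand {F : Type*} [NormedAddCommGroup F] [NormedSpace ℝ F]
    (B : (Fin n → ℝ) →L[ℝ] F) (v : Fin n → ℝ) :
    B v = ∑ k, v k • B (Pi.single k 1) := by
  conv_lhs => rw [← pi_single_sum v]
  rw [map_sum]
  simp

private noncomputable def clmM (A : Matrix (Fin n) (Fin n) ℝ) : (Fin n → ℝ) →L[ℝ] (Fin n → ℝ) :=
  LinearMap.toContinuousLinearMap (Matrix.mulVecLin A)

@[simp] private lemma clmM_apply (A : Matrix (Fin n) (Fin n) ℝ) (v : Fin n → ℝ) :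
    clmM A v = A.mulVec v := rfl

private lemma sum_bilin_orth (B : (Fin n → ℝ) →L[ℝ] ((Fin n → ℝ) →L[ℝ] ℂ))
    (L : Matrix (Fin n) (Fin n) ℝ) (hL : L * Lᵀ = 1) :
    ∑ j, B (L.mulVec (Pi.single j 1)) (L.mulVec (Pi.single j 1))
      = ∑ j, B (Pi.single j 1) (Pi.single j 1) := by
  have expand : ∀ v w : Fin n → ℝ,
      B v w = ∑ k, ∑ l, (v k * w l) • B (Pi.single k 1) (Pi.single l 1) := by
    intro v w
    rw [clm_expand B v]
    rw [ContinuousLinearMap.sum_apply]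
    refine Finset.sum_congr rfl fun k _ => ?_
    rw [ContinuousLinearMap.smul_apply, clm_expand (B (Pi.single k 1)) w, Finset.smul_sum]
    refine Finset.sum_congr rfl fun l _ => ?_
    rw [smul_smul]
  calc ∑ j, B (L.mulVec (Pi.single j 1)) (L.mulVec (Pi.single j 1))
      = ∑ j, ∑ k, ∑ l, (L k j * L l j) • B (Pi.single k 1) (Pi.single l 1) := by
        refine Finset.sum_congr rfl fun j _ => ?_
        rw [expand]
        simp [Matrix.mulVec_single]
    _ = ∑ k, ∑ l, (∑ j, L k j * L l j) • B (Pi.single k 1) (Pi.single l 1) := by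
        rw [Finset.sum_comm]
        refine Finset.sum_congr rfl fun k _ => ?_
        rw [Finset.sum_comm]
        refine Finset.sum_congr rfl fun l _ => ?_
        rw [Finset.sum_smul]
    _ = ∑ k, ∑ l, ((L * Lᵀ) k l) • B (Pi.single k 1) (Pi.single l 1) := by
        simp [Matrix.mul_apply, Matrix.transpose_apply]
    _ = ∑ j, B (Pi.single j 1) (Pi.single j 1) := by
        rw [hL]
        simp [Matrix.one_apply, ite_smul]

private lemma fderiv_fderiv_eval {g : (Fin n → ℝ) → ℂ} (hg : ContDiff ℝ (⊤ : ℕ∞) g)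
    (p v w : Fin n → ℝ) :
    fderiv ℝ (fun z => fderiv ℝ g z w) p v = fderiv ℝ (fderiv ℝ g) p v w := by
  have hf : HasFDerivAt (fderiv ℝ g) (fderiv ℝ (fderiv ℝ g) p) p :=
    (((hg.fderiv_right (m := 1) (by exact WithTop.coe_le_coe.mpr le_top)).differentiable one_ne_zero) p).hasFDerivAt
  have h4 : fderiv ℝ (fun z => fderiv ℝ g z w) p
      = (ContinuousLinearMap.apply ℝ ℂ w).comp (fderiv ℝ (fderiv ℝ g) p) :=
    ((ContinuousLinearMap.apply ℝ ℂ w).hasFDerivAt.comp p hf).fderiv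
  rw [h4]
  rfl

private lemma fderiv_comp_mulVec {g : (Fin n → ℝ) → ℂ} (hg : ContDiff ℝ (⊤ : ℕ∞) g)
    (A : Matrix (Fin n) (Fin n) ℝ) (z v : Fin n → ℝ) :
    fderiv ℝ (fun z' => g (A.mulVec z')) z v = fderiv ℝ g (A.mulVec z) (A.mulVec v) := by
  have h1 : HasFDerivAt g (fderiv ℝ g (A.mulVec z)) (A.mulVec z) :=
    ((hg.differentiable (by simp)) (A.mulVec z)).hasFDerivAt
  have h4 : fderiv ℝ (fun z' => g (A.mulVec z')) z = (fderiv ℝ g (A.mulVec z)).comp (clmM A) :=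
    (h1.comp z (clmM A).hasFDerivAt).fderiv
  rw [h4]
  rfl

private lemma fderiv_fderiv_comp_mulVec {g : (Fin n → ℝ) → ℂ} (hg : ContDiff ℝ (⊤ : ℕ∞) g)
    (A : Matrix (Fin n) (Fin n) ℝ) (z v w : Fin n → ℝ) :
    fderiv ℝ (fun z' => fderiv ℝ g (A.mulVec z') w) z v
      = fderiv ℝ (fderiv ℝ g) (A.mulVec z) (A.mulVec v) w := by
  have hf : HasFDerivAt (fderiv ℝ g) (fderiv ℝ (fderiv ℝ g) (A.mulVec z)) (A.mulVec z) :=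
    (((hg.fderiv_right (m := 1) (by exact WithTop.coe_le_coe.mpr le_top)).differentiable one_ne_zero) (A.mulVec z)).hasFDerivAt
  have h4 : fderiv ℝ (fun z' => fderiv ℝ g (A.mulVec z') w) z
      = (((ContinuousLinearMap.apply ℝ ℂ w).comp (fderiv ℝ (fderiv ℝ g) (A.mulVec z))).comp
          (clmM A)) :=
    (((ContinuousLinearMap.apply ℝ ℂ w).hasFDerivAt.comp (A.mulVec z) hf).comp z
      (clmM A).hasFDerivAt).fderiv
  rw [h4]
  rfl

private lemma hasDerivAt_exp_mulVec (M : Matrix (Fin n) (Fin n) ℝ) (x : Fin n → ℝ) (t : ℝ) :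
    HasDerivAt (fun s : ℝ => (exp (s • M)).mulVec x) ((exp (t • M) * M).mulVec x) t := by
  letI : SeminormedRing (Matrix (Fin n) (Fin n) ℝ) := Matrix.linftyOpSemiNormedRing
  letI : NormedRing (Matrix (Fin n) (Fin n) ℝ) := Matrix.linftyOpNormedRing
  letI : NormedAlgebra ℝ (Matrix (Fin n) (Fin n) ℝ) := Matrix.linftyOpNormedAlgebra
  letI : CompleteSpace (Matrix (Fin n) (Fin n) ℝ) := FiniteDimensional.complete ℝ _
  have h1 := hasDerivAt_exp_smul_const (𝕂 := ℝ) M t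
  let Ψ : Matrix (Fin n) (Fin n) ℝ →ₗ[ℝ] (Fin n → ℝ) :=
    { toFun := fun A => A.mulVec x,
      map_add' := fun A B => Matrix.add_mulVec A B x,
      map_smul' := fun r A => Matrix.smul_mulVec r A x }
  exact (LinearMap.toContinuousLinearMap Ψ).hasFDerivAt.comp_hasDerivAt t h1

end StmtAux

/-- Passing to a rotating frame removes a linear magnetic potential `C(x) = Mx/2`
at the cost of a quadratic electric potential `|Mx|²/4`. -/
theorem stmt13 (n : ℕ) (V : (Fin n → ℝ) → ℝ → ℂ)
    (M : Matrix (Fin n) (Fin n) ℝ) (hanti : Mᵀ = -M)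
    (C : (Fin n → ℝ) → Fin n → ℝ) (hC : ∀ x, C x = (2 : ℝ)⁻¹ • M.mulVec x)
    (u φ : (Fin n → ℝ) → ℝ → ℂ)
    (hu : ContDiff ℝ (⊤ : ℕ∞) (Function.uncurry u))
    (lap : ((Fin n → ℝ) → ℂ) → (Fin n → ℝ) → ℂ)
    (hlap : ∀ f x, lap f x =
      ∑ j : Fin n, fderiv ℝ (fun y => fderiv ℝ f y (Pi.single j 1)) x (Pi.single j 1))
    (magLap : ((Fin n → ℝ) → ℂ) → (Fin n → ℝ) → ℂ)
    (hmagLap : ∀ f x, magLap f x = ∑ j : Fin n,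
      (fderiv ℝ (fun y => fderiv ℝ f y (Pi.single j 1) - Complex.I * (C y j : ℝ) * f y) x
          (Pi.single j 1)
        - Complex.I * ((C x j : ℝ) : ℂ)
          * (fderiv ℝ f x (Pi.single j 1) - Complex.I * (C x j : ℝ) * f x)))
    (heq : ∀ x t, Complex.I * deriv (u x) t - magLap (fun y => u y t) x + V x t * u x t = 0)
    (hφ : ∀ x t, φ x t = u ((NormedSpace.exp (t • M)).mulVec x) t) :
    ∀ x t, Complex.I * deriv (φ x) t - lap (fun y => φ y t) x
      + V ((NormedSpace.exp (t • M)).mulVec x) t * φ x t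
      + (((∑ i, (M.mulVec x i) ^ 2) / 4 : ℝ) : ℂ) * φ x t = 0 := by
  intro x t
  -- abbreviations
  obtain ⟨L, hLdef⟩ : ∃ L', NormedSpace.exp (t • M) = L' := ⟨_, rfl⟩
  obtain ⟨y, hydef⟩ : ∃ y', L.mulVec x = y' := ⟨_, rfl⟩
  obtain ⟨g, hgdef⟩ : ∃ g', (fun z => u z t) = g' := ⟨_, rfl⟩
  rw [hLdef, hydef]
  have hgc : ContDiff ℝ (⊤ : ℕ∞) g := by
    rw [← hgdef]; exact hu.comp (contDiff_id.prodMk contDiff_const)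
  have hgd : DifferentiableAt ℝ g y := (hgc.differentiable (by simp)) y
  have hgy : u y t = g y := by rw [← hgdef]
  have hφy : φ x t = g y := by rw [hφ x t, hLdef, hydef, hgy]
  -- structure of M and L
  have hMjj : ∀ j, M j j = 0 := by
    intro j
    have h := congrFun (congrFun hanti j) j
    simp only [Matrix.transpose_apply, Matrix.neg_apply] at h
    linarith
  have htr : (t • M)ᵀ = -(t • M) := by rw [Matrix.transpose_smul, hanti, smul_neg]
  have hLT : Lᵀ = NormedSpace.exp (-(t • M)) := by rw [← hLdef, ← Matrix.exp_transpose, htr]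
  have hLLT : L * Lᵀ = 1 := by
    rw [hLT, ← hLdef, ← Matrix.exp_add_of_commute _ _ ((Commute.refl (t • M)).neg_right),
      add_neg_cancel, NormedSpace.exp_zero]
  have hLTL : Lᵀ * L = 1 := by
    rw [hLT, ← hLdef, ← Matrix.exp_add_of_commute _ _ ((Commute.refl (t • M)).neg_left),
      neg_add_cancel, NormedSpace.exp_zero]
  have hcomm : M * L = L * M := by
    rw [← hLdef]; exact (((Commute.refl M).smul_right t).exp_right).eq
  -- invariance of |M z|² under the rotation
  have hsq : ∀ w : Fin n → ℝ, ∑ i, (L.mulVec w i) ^ 2 = ∑ i, w i ^ 2 := by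
    intro w
    have h1 : ∀ v : Fin n → ℝ, ∑ i, v i ^ 2 = v ⬝ᵥ v := by
      intro v; simp [dotProduct, sq]
    rw [h1, h1, Matrix.dotProduct_mulVec, ← Matrix.mulVec_transpose, Matrix.mulVec_mulVec, hLTL,
      Matrix.one_mulVec]
  have hQ : ∑ i, (M.mulVec y i) ^ 2 = ∑ i, (M.mulVec x i) ^ 2 := by
    have h2 : M.mulVec y = L.mulVec (M.mulVec x) := by
      rw [← hydef, Matrix.mulVec_mulVec, hcomm, ← Matrix.mulVec_mulVec]
    rw [h2, hsq]
  -- time derivative of φ x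
  have hc : HasDerivAt (fun s : ℝ => (NormedSpace.exp (s • M)).mulVec x) (M.mulVec y) t := by
    have h := hasDerivAt_exp_mulVec M x t
    have h2 : (NormedSpace.exp (t • M) * M).mulVec x = M.mulVec y := by
      rw [hLdef, ← hcomm, ← Matrix.mulVec_mulVec, hydef]
    rwa [h2] at h
  have huy : HasFDerivAt (Function.uncurry u) (fderiv ℝ (Function.uncurry u) (y, t)) (y, t) :=
    ((hu.differentiable (by simp)) (y, t)).hasFDerivAt
  have hderiv : HasDerivAt (φ x) (fderiv ℝ (Function.uncurry u) (y, t) (M.mulVec y, 1)) t := by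
    have hφx : φ x = fun s => u ((NormedSpace.exp (s • M)).mulVec x) s :=
      funext fun s => hφ x s
    rw [hφx]
    have h := huy.comp_hasDerivAt_of_eq t (hc.prodMk (hasDerivAt_id t))
      (by rw [hLdef, hydef]; rfl)
    exact h
  have hsplit : fderiv ℝ (Function.uncurry u) (y, t) (M.mulVec y, (1 : ℝ))
      = fderiv ℝ g y (M.mulVec y) + deriv (u y) t := by
    have h1 : fderiv ℝ g y (M.mulVec y)
        = fderiv ℝ (Function.uncurry u) (y, t) (M.mulVec y, (0 : ℝ)) := by
      have hA : HasFDerivAt g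
          ((fderiv ℝ (Function.uncurry u) (y, t)).comp
            (ContinuousLinearMap.inl ℝ (Fin n → ℝ) ℝ)) y := by
        rw [← hgdef]
        exact huy.comp y (hasFDerivAt_prodMk_left (𝕜 := ℝ) y t)
      rw [hA.fderiv]
      simp
    have h2 : deriv (u y) t = fderiv ℝ (Function.uncurry u) (y, t) ((0 : Fin n → ℝ), (1 : ℝ)) := by
      have hB : HasDerivAt (u y) (fderiv ℝ (Function.uncurry u) (y, t) (0, 1)) t :=
        huy.comp_hasDerivAt t ((hasDerivAt_const t y).prodMk (hasDerivAt_id t))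
      exact hB.deriv
    have h3 : (M.mulVec y, (1 : ℝ)) = (M.mulVec y, (0 : ℝ)) + ((0 : Fin n → ℝ), (1 : ℝ)) := by
      simp
    rw [h3, map_add, h1, h2]
  -- spatial Laplacian of φ
  have hlapφ : lap (fun z => φ z t) x = lap g y := by
    rw [hlap, hlap]
    have hrw : (fun z => φ z t) = fun z => g (L.mulVec z) := by
      funext z
      rw [hφ z t, hLdef, ← hgdef]
    calc ∑ j, fderiv ℝ (fun z => fderiv ℝ (fun z' => φ z' t) z (Pi.single j 1)) x (Pi.single j 1)
        = ∑ j, fderiv ℝ (fderiv ℝ g) y (L.mulVec (Pi.single j 1)) (L.mulVec (Pi.single j 1)) := by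
          refine Finset.sum_congr rfl fun j _ => ?_
          rw [hrw]
          have h1 : (fun z => fderiv ℝ (fun z' => g (L.mulVec z')) z (Pi.single j 1))
              = fun z => fderiv ℝ g (L.mulVec z) (L.mulVec (Pi.single j 1)) :=
            funext fun z => fderiv_comp_mulVec hgc L z _
          rw [h1, fderiv_fderiv_comp_mulVec hgc L x _ _, hydef]
      _ = ∑ j, fderiv ℝ (fderiv ℝ g) y (Pi.single j 1) (Pi.single j 1) :=
          sum_bilin_orth _ L hLLT
      _ = ∑ j, fderiv ℝ (fun z => fderiv ℝ g z (Pi.single j 1)) y (Pi.single j 1) :=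
          Finset.sum_congr rfl fun j _ => (fderiv_fderiv_eval hgc y _ _).symm
  -- expansion of the magnetic Laplacian
  have hCval : ∀ z j, C z j = 2⁻¹ * M.mulVec z j := by
    intro z j; rw [hC]; rfl
  have hmagval : magLap g y = lap g y
      - ∑ j, 2 * Complex.I * ((C y j : ℝ) : ℂ) * fderiv ℝ g y (Pi.single j 1)
      - (∑ j, ((C y j : ℝ) : ℂ) ^ 2) * g y := by
    rw [hmagLap, hlap]
    have hterm : ∀ j : Fin n,
        fderiv ℝ (fun z => fderiv ℝ g z (Pi.single j 1) - Complex.I * (C z j : ℝ) * g z) y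
            (Pi.single j 1)
          - Complex.I * ((C y j : ℝ) : ℂ)
            * (fderiv ℝ g y (Pi.single j 1) - Complex.I * (C y j : ℝ) * g y)
        = fderiv ℝ (fun z => fderiv ℝ g z (Pi.single j 1)) y (Pi.single j 1)
          - 2 * Complex.I * ((C y j : ℝ) : ℂ) * fderiv ℝ g y (Pi.single j 1)
          - ((C y j : ℝ) : ℂ) ^ 2 * g y := by
      intro j
      have hcfun : (fun z => ((C z j : ℝ) : ℂ))
          = ⇑(Complex.ofRealCLM.comp
              ((2⁻¹ : ℝ) • (ContinuousLinearMap.proj j).comp (clmM M))) := by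
        funext z
        simp [hCval z j]
      have hcd : DifferentiableAt ℝ (fun z => ((C z j : ℝ) : ℂ)) y := by
        rw [hcfun]
        exact (Complex.ofRealCLM.comp
          ((2⁻¹ : ℝ) • (ContinuousLinearMap.proj j).comp (clmM M))).differentiableAt
      have hcderiv : fderiv ℝ (fun z => ((C z j : ℝ) : ℂ)) y (Pi.single j 1) = 0 := by
        rw [hcfun, ContinuousLinearMap.fderiv]
        simp [Matrix.mulVec_single, hMjj j]
      have hmul : fderiv ℝ (fun z => ((C z j : ℝ) : ℂ) * g z) y (Pi.single j 1)
          = ((C y j : ℝ) : ℂ) * fderiv ℝ g y (Pi.single j 1) := by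
        rw [fderiv_fun_mul hcd hgd]
        simp [hcderiv, smul_eq_mul]
      have hIC : (fun z => Complex.I * (C z j : ℝ) * g z)
          = fun z => Complex.I * (((C z j : ℝ) : ℂ) * g z) := by
        funext z; ring
      have hd2 : DifferentiableAt ℝ (fun z => Complex.I * (C z j : ℝ) * g z) y := by
        rw [hIC]
        exact (hcd.mul hgd).const_mul _
      have hImul : fderiv ℝ (fun z => Complex.I * (C z j : ℝ) * g z) y (Pi.single j 1)
          = Complex.I * (((C y j : ℝ) : ℂ) * fderiv ℝ g y (Pi.single j 1)) := by
        rw [hIC, fderiv_const_mul (hcd.fun_mul hgd) Complex.I]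
        rw [ContinuousLinearMap.smul_apply, hmul]
        simp
      have hd1 : DifferentiableAt ℝ (fun z => fderiv ℝ g z (Pi.single j 1)) y := by
        exact ((ContinuousLinearMap.apply ℝ ℂ (Pi.single j 1)).differentiable.comp
          ((hgc.fderiv_right (m := 1) (by exact WithTop.coe_le_coe.mpr le_top)).differentiable one_ne_zero)) y
      rw [fderiv_fun_sub hd1 hd2, ContinuousLinearMap.sub_apply, hImul]
      have hI : Complex.I ^ 2 = -1 := Complex.I_sq
      linear_combination (((C y j : ℝ) : ℂ) ^ 2 * g y) * hI
    rw [Finset.sum_congr rfl fun j _ => hterm j]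
    rw [Finset.sum_sub_distrib, Finset.sum_sub_distrib, Finset.sum_mul]
  -- expanding the first-order term
  have hexpand : fderiv ℝ g y (M.mulVec y)
      = ∑ j, ((M.mulVec y j : ℝ) : ℂ) * fderiv ℝ g y (Pi.single j 1) := by
    rw [clm_expand (fderiv ℝ g y) (M.mulVec y)]
    exact Finset.sum_congr rfl fun j _ => Complex.real_smul
  -- the original equation at the rotated point
  have heq' := heq y t
  rw [hgdef, hgy] at heq'
  -- assemble
  rw [hderiv.deriv, hsplit, hlapφ, hφy, hmagval] at *
  -- turn the C-sums into M-sums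
  have hsum1 : ∑ j, 2 * Complex.I * ((C y j : ℝ) : ℂ) * fderiv ℝ g y (Pi.single j 1)
      = ∑ j, Complex.I * ((M.mulVec y j : ℝ) : ℂ) * fderiv ℝ g y (Pi.single j 1) := by
    refine Finset.sum_congr rfl fun j _ => ?_
    rw [hCval y j]
    push_cast
    ring
  have hsum2 : (∑ j, ((C y j : ℝ) : ℂ) ^ 2)
      = (((∑ i, (M.mulVec x i) ^ 2) / 4 : ℝ) : ℂ) := by
    rw [← hQ]
    push_cast
    rw [Finset.sum_div]
    refine Finset.sum_congr rfl fun j _ => ?_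
    rw [hCval y j]
    push_cast
    ring
  rw [hsum1, hsum2] at heq'
  rw [hexpand]
  calc Complex.I * (∑ j, ((M.mulVec y j : ℝ) : ℂ) * fderiv ℝ g y (Pi.single j 1) + deriv (u y) t)
        - lap g y + V y t * g y + (((∑ i, (M.mulVec x i) ^ 2) / 4 : ℝ) : ℂ) * g y
      = (Complex.I * deriv (u y) t
          - (lap g y
            - ∑ j, Complex.I * ((M.mulVec y j : ℝ) : ℂ) * fderiv ℝ g y (Pi.single j 1)
            - (((∑ i, (M.mulVec x i) ^ 2) / 4 : ℝ) : ℂ) * g y)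
          + V y t * g y)
        + (Complex.I * ∑ j, ((M.mulVec y j : ℝ) : ℂ) * fderiv ℝ g y (Pi.single j 1)
            - ∑ j, Complex.I * ((M.mulVec y j : ℝ) : ℂ) * fderiv ℝ g y (Pi.single j 1)) := by
        ring
    _ = 0 := by
        rw [heq', Finset.mul_sum]
        simp [mul_assoc]
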